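/- For all n ≥ 0: s(4n) = 2s(n) − a(n), s(4n+1) = 2s(n), s(4n+3) = 2s(n), and s(4n+2) = 2s(n) + (-1)^n · a(n). -/

import Mathlib

/-!
Since `a(2k) + a(2k+1) = a(k) + (-1)^k a(k)` and `a(2k) - a(2k+1) = a(k) - (-1)^k a(k)`,
pairing consecutive terms gives `s(2n+1) = s(n) + t(n)` and `t(2n+1) = s(n) - t(n)`,
where `t` is the alternating partial sum. Hence `s(4n+1) = s(2n) + t(2n) = 2 s(n)`: the
correction terms `∓ (-1)^n a(n)` from dropping `a(2n+1)` cancel. The other three residues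
differ from `s(4n+1)` by a single term `a(4n+j)`.
-/

def rs : ℕ → ℤ
  | 0 => 1
  | (n+1) =>
    if (n+1) % 2 = 0 then rs ((n+1)/2)
    else (-1)^((n+1)/2) * rs ((n+1)/2)
decreasing_by all_goals exact Nat.div_lt_self (Nat.succ_pos n) (by norm_num)

def s (n : ℕ) : ℤ := ∑ i ∈ Finset.range (n+1), rs i

def t (n : ℕ) : ℤ := ∑ i ∈ Finset.range (n+1), (-1)^i * rs i

lemma rs_two_mul (n : ℕ) : rs (2 * n) = rs n := by
  cases n with
  | zero => rfl
  | succ m =>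
    rw [show 2 * (m + 1) = (2 * m + 1) + 1 by ring, rs]
    simp [show (2 * m + 1 + 1) / 2 = m + 1 by omega, show (2 * m + 1 + 1) % 2 = 0 by omega]

lemma rs_two_mul_add_one (n : ℕ) : rs (2 * n + 1) = (-1) ^ n * rs n := by
  rw [rs]
  simp [show (2 * n + 1) / 2 = n by omega]

lemma s_succ (n : ℕ) : s (n + 1) = s n + rs (n + 1) :=
  Finset.sum_range_succ _ _

lemma t_succ (n : ℕ) : t (n + 1) = t n + (-1) ^ (n + 1) * rs (n + 1) :=
  Finset.sum_range_succ _ _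

lemma s_two_mul_add_one (n : ℕ) : s (2 * n + 1) = s n + t n := by
  induction n with
  | zero => simp [s, t, Finset.sum_range_succ, rs_two_mul_add_one 0]
  | succ m ih =>
    rw [show 2 * (m + 1) + 1 = (2 * m + 1) + 1 + 1 by ring, s_succ, s_succ, ih,
      show 2 * m + 1 + 1 = 2 * (m + 1) by ring, rs_two_mul, rs_two_mul_add_one, s_succ, t_succ]
    ring

lemma t_two_mul_add_one (n : ℕ) : t (2 * n + 1) = s n - t n := by
  induction n with
  | zero => simp [s, t, Finset.sum_range_succ, rs_two_mul_add_one 0]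
  | succ m ih =>
    rw [show 2 * (m + 1) + 1 = (2 * m + 1) + 1 + 1 by ring, t_succ, t_succ, ih,
      show 2 * m + 1 + 1 = 2 * (m + 1) by ring, rs_two_mul, rs_two_mul_add_one, s_succ, t_succ]
    simp only [pow_succ, pow_mul]
    ring

lemma s_two_mul (n : ℕ) : s (2 * n) = s n + t n - (-1) ^ n * rs n := by
  rw [← s_two_mul_add_one, s_succ, rs_two_mul_add_one]
  ring

lemma t_two_mul (n : ℕ) : t (2 * n) = s n - t n + (-1) ^ n * rs n := by
  rw [← t_two_mul_add_one, t_succ, rs_two_mul_add_one, pow_succ, pow_mul]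
  ring

lemma s_four_mul_add_one (n : ℕ) : s (4 * n + 1) = 2 * s n := by
  rw [show 4 * n + 1 = 2 * (2 * n) + 1 by ring, s_two_mul_add_one, s_two_mul, t_two_mul]
  ring

theorem stmt3 : ∀ n : ℕ,
    s (4*n) = 2 * s n - rs n ∧
    s (4*n+1) = 2 * s n ∧
    s (4*n+3) = 2 * s n ∧
    s (4*n+2) = 2 * s n + (-1)^n * rs n := by
  intro n
  have rs_one : rs (4 * n + 1) = rs n := by
    rw [show 4 * n + 1 = 2 * (2 * n) + 1 by ring, rs_two_mul_add_one, rs_two_mul, pow_mul]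
    simp
  have rs_two : rs (4 * n + 2) = (-1) ^ n * rs n := by
    rw [show 4 * n + 2 = 2 * (2 * n + 1) by ring, rs_two_mul, rs_two_mul_add_one]
  have rs_three : rs (4 * n + 3) = -((-1) ^ n * rs n) := by
    rw [show 4 * n + 3 = 2 * (2 * n + 1) + 1 by ring, rs_two_mul_add_one, rs_two_mul_add_one,
      pow_succ, pow_mul]
    simp
  have s_two : s (4 * n + 2) = 2 * s n + (-1) ^ n * rs n := by
    rw [s_succ, s_four_mul_add_one, rs_two]
  refine ⟨?_, s_four_mul_add_one n, ?_, s_two⟩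
  · linarith [s_succ (4 * n), s_four_mul_add_one n]
  · rw [s_succ, s_two, rs_three]
    ring
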